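/- arXiv:2211.04379 — 9 statements merged into one kernel-verified Lean document; each statement's English description precedes it below -/
import Mathlib

section
/- If n is a nonzero complex number expressible by an expression in ζ_k using m copies of ζ_k (additions and multiplications only), then 3·log₃|n| ≤ m. Equivalently, |n| ≤ 3^(m/3). -/
/-- Expressions built from a single symbol `x` using addition and multiplication. -/
inductive Expr where
  | x : Expr
  | add : Expr → Expr → Expr
  | mul : Expr → Expr → Expr

/-- The size of an expression: the number of occurrences of `x`. -/
def Expr.size : Expr → ℕ
  | .x => 1
  | .add a b => a.size + b.size
  | .mul a b => a.size + b.size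

/-- Evaluate an expression, sending the symbol `x` to `z`. -/
def Expr.eval {R : Type*} [Add R] [Mul R] (z : R) : Expr → R
  | .x => z
  | .add a b => a.eval z + b.eval z
  | .mul a b => a.eval z * b.eval z

/-- The primitive `k`-th root of unity `exp(2πi/k)`. -/
noncomputable def zeta (k : ℕ) : ℂ := Complex.exp (2 * Real.pi * Complex.I / k)

/-- The complexity of `n` with base `z`: the least number of copies of `z`
needed to express `n` using additions and multiplications. -/
noncomputable def complexity (z n : ℂ) : ℕ :=
  sInf {m | ∃ e : Expr, e.size = m ∧ e.eval z = n}

lemma size_pos (e : Expr) : 1 ≤ e.size := by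
  induction e <;> simp [Expr.size] <;> omega

lemma one_le_eval1 (e : Expr) : 1 ≤ e.eval (1 : ℕ) := by
  induction e with
  | x => simp [Expr.eval]
  | add a b ha hb => simp only [Expr.eval]; omega
  | mul a b ha hb => simp only [Expr.eval]; simpa using Nat.mul_le_mul ha hb

lemma eq_x_of_size_one (e : Expr) (h : e.size = 1) : e = Expr.x := by
  cases e with
  | x => rfl
  | add a b => exfalso; have := size_pos a; have := size_pos b; simp [Expr.size] at h; omega
  | mul a b => exfalso; have := size_pos a; have := size_pos b; simp [Expr.size] at h; omega

lemma eval1_le_two_of_size_two (e : Expr) (h : e.size = 2) : e.eval (1 : ℕ) ≤ 2 := by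
  cases e with
  | x => simp [Expr.eval]
  | add a b =>
      have ha := size_pos a; have hb := size_pos b
      simp [Expr.size] at h
      have ha1 : a.size = 1 := by omega
      have hb1 : b.size = 1 := by omega
      rw [eq_x_of_size_one a ha1, eq_x_of_size_one b hb1]
      simp [Expr.eval]
  | mul a b =>
      have ha := size_pos a; have hb := size_pos b
      simp [Expr.size] at h
      have ha1 : a.size = 1 := by omega
      have hb1 : b.size = 1 := by omega
      rw [eq_x_of_size_one a ha1, eq_x_of_size_one b hb1]
      simp [Expr.eval]

lemma cube_root_cube : ((3:ℝ) ^ ((1:ℝ)/3)) ^ (3:ℕ) = 3 := by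
  rw [← Real.rpow_natCast ((3:ℝ) ^ ((1:ℝ)/3)) 3, ← Real.rpow_mul (by norm_num)]
  norm_num

lemma cube_root_pos : 0 < (3:ℝ) ^ ((1:ℝ)/3) := Real.rpow_pos_of_pos (by norm_num) _

lemma cube_root_sq : (2:ℝ) ≤ ((3:ℝ) ^ ((1:ℝ)/3)) ^ (2:ℕ) := by
  have h := cube_root_cube
  have hp := cube_root_pos
  nlinarith [sq_nonneg ((3:ℝ) ^ ((1:ℝ)/3) - 3/2), sq_nonneg ((3:ℝ) ^ ((1:ℝ)/3))]

lemma cube_root_ge : (4/3 : ℝ) ≤ (3:ℝ) ^ ((1:ℝ)/3) := by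
  have h := cube_root_cube
  have hp := cube_root_pos
  nlinarith [sq_nonneg ((3:ℝ) ^ ((1:ℝ)/3) - 4/3), sq_nonneg ((3:ℝ) ^ ((1:ℝ)/3))]

lemma rpow_third_sq : ((3:ℝ) ^ ((1:ℝ)/3)) ^ (2:ℕ) = (3:ℝ) ^ ((2:ℝ)/3) := by
  rw [← Real.rpow_natCast ((3:ℝ) ^ ((1:ℝ)/3)) 2, ← Real.rpow_mul (by norm_num)]
  norm_num

lemma add_big (u v : ℝ) (p q : ℕ) (hu : 2 ≤ u) (hv : 2 ≤ v)
    (hub : u ≤ 3 ^ ((p:ℝ)/3)) (hvb : v ≤ 3 ^ ((q:ℝ)/3)) :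
    u + v ≤ 3 ^ (((p:ℝ) + q)/3) := by
  have h : ((p:ℝ) + q)/3 = (p:ℝ)/3 + (q:ℝ)/3 := by ring
  rw [h, Real.rpow_add (by norm_num)]
  have h1 : u + v ≤ u * v := by nlinarith
  have h2 : u * v ≤ 3 ^ ((p:ℝ)/3) * 3 ^ ((q:ℝ)/3) :=
    mul_le_mul hub hvb (by linarith) (Real.rpow_nonneg (by norm_num) _)
  linarith

lemma add_one_case (v p q : ℕ) (hv : 1 ≤ v) (hp : 1 ≤ p) (hq : 1 ≤ q)
    (hq1 : q = 1 → v = 1) (hq2 : q = 2 → v ≤ 2)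
    (hvb : (v:ℝ) ≤ 3 ^ ((q:ℝ)/3)) :
    (1 + v : ℝ) ≤ 3 ^ (((p:ℝ) + q)/3) := by
  have hsplit : ((p:ℝ) + q)/3 = (p:ℝ)/3 + (q:ℝ)/3 := by ring
  have hs0 : (0:ℝ) < 3 ^ ((q:ℝ)/3) := Real.rpow_pos_of_pos (by norm_num) _
  have hs1 : (1:ℝ) ≤ 3 ^ ((q:ℝ)/3) := by
    calc (1:ℝ) = 3 ^ (0:ℝ) := by norm_num
    _ ≤ 3 ^ ((q:ℝ)/3) := Real.rpow_le_rpow_of_exponent_le (by norm_num) (by positivity)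
  rcases Nat.lt_or_ge p 2 with hp1 | hp2
  · -- p = 1
    have hp1 : p = 1 := by omega
    subst hp1
    rcases Nat.lt_or_ge q 3 with hqs | hq3
    · interval_cases q
      · have : v = 1 := hq1 rfl
        subst this
        have := cube_root_sq
        rw [rpow_third_sq] at this
        convert this using 2 <;> norm_num
      · have hv2 : v ≤ 2 := hq2 rfl
        have : ((1:ℝ) + 2)/3 = 1 := by norm_num
        rw [show ((1:ℕ):ℝ) = 1 from by norm_num, show ((2:ℕ):ℝ) = 2 from by norm_num,
          this, Real.rpow_one]
        have : (v:ℝ) ≤ 2 := by exact_mod_cast hv2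
        linarith
    · -- q ≥ 3
      rw [hsplit, Real.rpow_add (by norm_num)]
      have hs3 : (3:ℝ) ≤ 3 ^ ((q:ℝ)/3) := by
        calc (3:ℝ) = 3 ^ (1:ℝ) := by norm_num
        _ ≤ 3 ^ ((q:ℝ)/3) := by
          apply Real.rpow_le_rpow_of_exponent_le (by norm_num)
          have : (3:ℝ) ≤ (q:ℝ) := by exact_mod_cast hq3
          linarith
      have ht : (4/3:ℝ) ≤ 3 ^ (((1:ℕ):ℝ)/3) := by
        rw [show (((1:ℕ):ℝ)/3) = (1:ℝ)/3 from by norm_num]; exact cube_root_ge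
      have hvle : (v:ℝ) ≤ 3 ^ ((q:ℝ)/3) := hvb
      nlinarith
  · -- p ≥ 2
    rw [hsplit, Real.rpow_add (by norm_num)]
    have h2p : (2:ℝ) ≤ 3 ^ ((p:ℝ)/3) := by
      have : (3:ℝ) ^ ((2:ℝ)/3) ≤ 3 ^ ((p:ℝ)/3) := by
        apply Real.rpow_le_rpow_of_exponent_le (by norm_num)
        have : (2:ℝ) ≤ (p:ℝ) := by exact_mod_cast hp2
        linarith
      have h2 := cube_root_sq
      rw [rpow_third_sq] at h2
      linarith
    nlinarith

lemma eval1_bound (e : Expr) : ((e.eval (1:ℕ) : ℕ) : ℝ) ≤ 3 ^ ((e.size : ℝ)/3) := by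
  induction e with
  | x =>
      simp only [Expr.eval, Expr.size]
      calc ((1:ℕ):ℝ) = 3 ^ (0:ℝ) := by norm_num
      _ ≤ 3 ^ (((1:ℕ):ℝ)/3) := Real.rpow_le_rpow_of_exponent_le (by norm_num) (by norm_num)
  | add a b ha hb =>
      simp only [Expr.eval, Expr.size]
      push_cast
      have hua := one_le_eval1 a
      have hub := one_le_eval1 b
      have hpa := size_pos a
      have hpb := size_pos b
      rcases Nat.lt_or_ge (a.eval 1) 2 with h1 | h2
      · have h1 : a.eval (1:ℕ) = 1 := by omega
        rw [h1]
        push_cast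
        exact add_one_case (b.eval 1) a.size b.size hub hpa hpb
          (fun h => by have := eq_x_of_size_one b h; rw [this]; rfl)
          (fun h => eval1_le_two_of_size_two b h) hb
      rcases Nat.lt_or_ge (b.eval 1) 2 with h1 | h2'
      · have h1 : b.eval (1:ℕ) = 1 := by omega
        rw [h1]
        push_cast
        rw [add_comm ((a.eval 1 : ℕ):ℝ) 1, add_comm ((a.size:ℕ):ℝ) ((b.size:ℕ):ℝ)]
        exact add_one_case (a.eval 1) b.size a.size hua hpb hpa
          (fun h => by have := eq_x_of_size_one a h; rw [this]; rfl)
          (fun h => eval1_le_two_of_size_two a h) ha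
      · exact add_big _ _ _ _ (by exact_mod_cast h2) (by exact_mod_cast h2') ha hb
  | mul a b ha hb =>
      simp only [Expr.eval, Expr.size]
      push_cast
      have h : ((a.size:ℝ) + b.size)/3 = (a.size:ℝ)/3 + (b.size:ℝ)/3 := by ring
      rw [h, Real.rpow_add (by norm_num)]
      exact mul_le_mul ha hb (by positivity) (Real.rpow_nonneg (by norm_num) _)

lemma abs_eval_le (z : ℂ) (hz : ‖z‖ ≤ 1) (e : Expr) :
    ‖e.eval z‖ ≤ ((e.eval (1:ℕ) : ℕ) : ℝ) := by
  induction e with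
  | x => simpa [Expr.eval] using hz
  | add a b ha hb =>
      simp only [Expr.eval]
      push_cast
      exact le_trans (norm_add_le _ _) (by linarith)
  | mul a b ha hb =>
      simp only [Expr.eval, norm_mul]
      push_cast
      exact mul_le_mul ha hb (norm_nonneg _) (by positivity)

lemma abs_zeta (k : ℕ) : ‖zeta k‖ = 1 := by
  unfold zeta
  rw [Complex.norm_exp]
  have : (2 * (Real.pi:ℂ) * Complex.I / (k:ℂ)).re = 0 := by
    simp [Complex.div_re, Complex.mul_re, Complex.mul_im]
  rw [this, Real.exp_zero]

theorem log_lower_bound_of_expr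
    (k : ℕ) (hk : k ≠ 0) (e : Expr) (n : ℂ) (m : ℕ)
    (he : e.eval (zeta k) = n) (hn : n ≠ 0) (hm : e.size = m) :
    3 * Real.logb 3 (‖n‖) ≤ m ∧
      ‖n‖ ≤ 3 ^ ((m : ℝ) / 3) := by
  subst he hm
  have hb : ‖e.eval (zeta k)‖ ≤ 3 ^ ((e.size : ℝ) / 3) :=
    le_trans (abs_eval_le (zeta k) (le_of_eq (abs_zeta k)) e) (eval1_bound e)
  refine ⟨?_, hb⟩
  have hpos : 0 < ‖e.eval (zeta k)‖ := norm_pos_iff.mpr hn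
  have hlog : Real.logb 3 (‖e.eval (zeta k)‖) ≤ (e.size : ℝ) / 3 := by
    rw [Real.logb_le_iff_le_rpow (by norm_num) hpos]
    exact hb
  linarith
end

section
/- For every prime p, the complexity of 1 in base ζ_p equals p; that is, ‖1‖_p = p. -/
/-- The polynomial (over ℕ) corresponding to an expression. -/
noncomputable def Expr.toPoly : Expr → Polynomial ℕ
  | .x => Polynomial.X
  | .add a b => a.toPoly + b.toPoly
  | .mul a b => a.toPoly * b.toPoly

lemma Expr.toPoly_eval₂ (z : ℂ) (e : Expr) :
    e.toPoly.eval₂ (Nat.castRingHom ℂ) z = e.eval z := by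
  induction e with
  | x => simp [toPoly, eval]
  | add a b ha hb => simp [toPoly, eval, Polynomial.eval₂_add, ha, hb]
  | mul a b ha hb => simp [toPoly, eval, Polynomial.eval₂_mul, ha, hb]

lemma Expr.toPoly_natDegree (e : Expr) : e.toPoly.natDegree ≤ e.size := by
  induction e with
  | x => simp [toPoly, size]
  | add a b ha hb =>
      refine le_trans (Polynomial.natDegree_add_le _ _) ?_
      simp only [toPoly, size]
      omega
  | mul a b ha hb =>
      refine le_trans (Polynomial.natDegree_mul_le) ?_
      simp only [size]
      omega

lemma Expr.toPoly_coeff_zero (e : Expr) : e.toPoly.coeff 0 = 0 := by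
  induction e with
  | x => simp [toPoly]
  | add a b ha hb => simp [toPoly, ha, hb]
  | mul a b ha hb => simp [toPoly, Polynomial.mul_coeff_zero, ha, hb]

/-- Expression for x^(n+1). -/
def xpow : ℕ → Expr
  | 0 => .x
  | n+1 => .mul .x (xpow n)

lemma xpow_size (n : ℕ) : (xpow n).size = n + 1 := by
  induction n with
  | zero => rfl
  | succ n ih => simp [xpow, Expr.size, ih]; omega

lemma xpow_eval (z : ℂ) (n : ℕ) : (xpow n).eval z = z ^ (n + 1) := by
  induction n with
  | zero => simp [xpow, Expr.eval]
  | succ n ih => simp [xpow, Expr.eval, ih]; ring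

theorem complexity_one_prime (p : ℕ) (hp : p.Prime) :
    complexity (zeta p) 1 = p := by
  have hp0 : p ≠ 0 := hp.ne_zero
  have hζ : IsPrimitiveRoot (zeta p) p := Complex.isPrimitiveRoot_exp p hp0
  have hmem : p ∈ {m | ∃ e : Expr, e.size = m ∧ e.eval (zeta p) = 1} := by
    refine ⟨xpow (p - 1), ?_, ?_⟩
    · rw [xpow_size]; omega
    · rw [xpow_eval]
      have : p - 1 + 1 = p := by omega
      rw [this, hζ.pow_eq_one]
  have hlb : ∀ m ∈ {m | ∃ e : Expr, e.size = m ∧ e.eval (zeta p) = 1}, p ≤ m := by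
    rintro m ⟨e, hsize, heval⟩
    by_contra hlt
    push_neg at hlt
    -- f : ℕ[x], deg ≤ m < p, coeff 0 = 0, f(ζ) = 1
    set f := e.toPoly with hf
    have hdeg : f.natDegree ≤ m := hsize ▸ e.toPoly_natDegree
    have hc0 : f.coeff 0 = 0 := e.toPoly_coeff_zero
    have hev : f.eval₂ (Nat.castRingHom ℂ) (zeta p) = 1 := by
      rw [e.toPoly_eval₂, heval]
    -- work over ℚ
    set F : Polynomial ℚ := f.map (Nat.castRingHom ℚ) with hF
    have haevalF : (Polynomial.aeval (zeta p)) F = 1 := by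
      rw [hF, Polynomial.aeval_def, Polynomial.eval₂_map]
      rw [show (algebraMap ℚ ℂ).comp (Nat.castRingHom ℚ) = Nat.castRingHom ℂ from
        Subsingleton.elim _ _]
      exact hev
    set g : Polynomial ℚ := F - 1 with hg
    have haevalg : (Polynomial.aeval (zeta p)) g = 0 := by
      rw [hg]; simp [haevalF]
    have hgc0 : g.coeff 0 = -1 := by
      rw [hg, hF]
      simp [Polynomial.coeff_map, hc0]
    have hgne : g ≠ 0 := fun h => by simp [h] at hgc0
    have hmin : minpoly ℚ (zeta p) = Polynomial.cyclotomic p ℚ :=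
      (Polynomial.cyclotomic_eq_minpoly_rat hζ hp.pos).symm
    have hdvd : Polynomial.cyclotomic p ℚ ∣ g := hmin ▸ minpoly.dvd ℚ (zeta p) haevalg
    obtain ⟨q, hq⟩ := hdvd
    have hΦdeg : (Polynomial.cyclotomic p ℚ).natDegree = p - 1 := by
      rw [Polynomial.natDegree_cyclotomic, Nat.totient_prime hp]
    have hΦne : (Polynomial.cyclotomic p ℚ) ≠ 0 := Polynomial.cyclotomic_ne_zero p ℚ
    have hqne : q ≠ 0 := by
      rintro rfl
      rw [mul_zero] at hq
      exact hgne hq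
    have hgdeg : g.natDegree ≤ p - 1 := by
      have h1 : F.natDegree = f.natDegree := Polynomial.natDegree_map_eq_of_injective
        (Nat.cast_injective) f
      have h2 : g.natDegree ≤ max F.natDegree (1 : Polynomial ℚ).natDegree :=
        Polynomial.natDegree_sub_le _ _
      simp only [Polynomial.natDegree_one] at h2
      omega
    have hmul : g.natDegree = (Polynomial.cyclotomic p ℚ).natDegree + q.natDegree := by
      rw [hq, Polynomial.natDegree_mul hΦne hqne]
    have hqdeg : q.natDegree = 0 := by omega
    obtain ⟨a, rfl⟩ : ∃ a, q = Polynomial.C a := ⟨q.coeff 0, (Polynomial.eq_C_of_natDegree_eq_zero hqdeg)⟩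
    -- cyclotomic p = ∑ X^i
    haveI : Fact p.Prime := ⟨hp⟩
    have hcyc : Polynomial.cyclotomic p ℚ = ∑ i ∈ Finset.range p, Polynomial.X ^ i :=
      Polynomial.cyclotomic_prime ℚ p
    have hΦ0 : (Polynomial.cyclotomic p ℚ).coeff 0 = 1 := by
      rw [hcyc, Polynomial.finset_sum_coeff]
      simp [Polynomial.coeff_X_pow, Finset.sum_ite_eq', hp.pos]
    have hΦ1 : (Polynomial.cyclotomic p ℚ).coeff 1 = 1 := by
      rw [hcyc, Polynomial.finset_sum_coeff]
      simp [Polynomial.coeff_X_pow, Finset.sum_ite_eq', hp.one_lt]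
    have ha : a = -1 := by
      have := congrArg (fun P => Polynomial.coeff P 0) hq
      simp only [Polynomial.coeff_mul_C, hΦ0, one_mul, hgc0] at this
      linarith
    have hcoeff1 : g.coeff 1 = -1 := by
      have := congrArg (fun P => Polynomial.coeff P 1) hq
      simp only [Polynomial.coeff_mul_C, hΦ1, one_mul, ha] at this
      simpa using this
    have : (f.coeff 1 : ℚ) = -1 := by
      have : g.coeff 1 = (f.coeff 1 : ℚ) := by
        rw [hg, hF]
        simp [Polynomial.coeff_sub, Polynomial.coeff_map, Polynomial.coeff_one]
      rw [hcoeff1] at this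
      linarith [this]
    have hnn : (0 : ℚ) ≤ (f.coeff 1 : ℚ) := Nat.cast_nonneg _
    rw [this] at hnn
    norm_num at hnn
  unfold complexity
  exact le_antisymm (Nat.sInf_le hmem) (le_csInf ⟨p, hmem⟩ hlb)
end

section
/- Let p be prime, ζ = exp(2πi/p), and suppose integers a_0, a_1, ..., a_{p-1} satisfy a_0 + a_1 ζ^g + a_2 ζ^{g²} + ... + a_{p-1} ζ^{g^{p-1}} = a_0 + a_1 ζ^{g²} + a_2 ζ^{g³} + ... + a_{p-1} ζ^{g^p}, where g is a primitive root modulo p. Then a_1 = a_2 = ... = a_{p-1}. -/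
open Polynomial Finset

lemma key_coeffs (p : ℕ) (hp : p.Prime) (ζ : ℂ) (hζ : IsPrimitiveRoot ζ p)
    (f : ℕ → ℤ) (hf : ∑ t ∈ Finset.range p, (f t : ℂ) * ζ ^ t = 0) :
    ∀ s, s < p → ∀ t, t < p → f s = f t := by
  haveI := Fact.mk hp
  set P : ℚ[X] := ∑ t ∈ Finset.range p, C ((f t : ℚ)) * X ^ t with hP
  have hPeval : Polynomial.aeval ζ P = 0 := by
    rw [hP, map_sum]
    simpa using hf
  have hdvd : Polynomial.cyclotomic p ℚ ∣ P := by
    rw [Polynomial.cyclotomic_eq_minpoly_rat hζ hp.pos]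
    exact minpoly.dvd ℚ ζ hPeval
  obtain ⟨q, hq⟩ := hdvd
  have hΦdeg : (Polynomial.cyclotomic p ℚ).natDegree = p - 1 := by
    rw [Polynomial.natDegree_cyclotomic, Nat.totient_prime hp]
  have hcoeffP : ∀ t, t < p → P.coeff t = (f t : ℚ) := by
    intro t ht
    rw [hP, Polynomial.finset_sum_coeff]
    rw [Finset.sum_eq_single t]
    · simp
    · intro b _ hb; simp [Polynomial.coeff_C_mul, Polynomial.coeff_X_pow, Ne.symm hb]
    · intro hb; exact absurd (Finset.mem_range.2 ht) hb
  have hΦcoeff : ∀ t, t < p → (Polynomial.cyclotomic p ℚ).coeff t = 1 := by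
    intro t ht
    rw [Polynomial.cyclotomic_prime, Polynomial.finset_sum_coeff]
    rw [Finset.sum_eq_single t]
    · simp
    · intro b _ hb; simp [Polynomial.coeff_X_pow, Ne.symm hb]
    · intro hb; exact absurd (Finset.mem_range.2 ht) hb
  have hqC : q = C (q.coeff 0) := by
    by_cases hq0 : q = 0
    · simp [hq0]
    · apply Polynomial.eq_C_of_natDegree_eq_zero
      have hΦ0 : Polynomial.cyclotomic p ℚ ≠ 0 := Polynomial.cyclotomic_ne_zero p ℚ
      have hdeg : P.natDegree = (Polynomial.cyclotomic p ℚ).natDegree + q.natDegree := by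
        rw [hq, Polynomial.natDegree_mul hΦ0 hq0]
      have hPdeg : P.natDegree ≤ p - 1 := by
        apply Polynomial.natDegree_sum_le_of_forall_le
        intro t ht
        calc (C ((f t : ℚ)) * X ^ t).natDegree ≤ t := by
              apply le_trans (Polynomial.natDegree_C_mul_le _ _)
              simp
          _ ≤ p - 1 := Nat.le_sub_one_of_lt (Finset.mem_range.1 ht)
      omega
  have hco : ∀ t, t < p → (f t : ℚ) = q.coeff 0 := by
    intro t ht
    have := hcoeffP t ht
    rw [hq, hqC, Polynomial.coeff_mul_C, hΦcoeff t ht, one_mul] at this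
    linarith
  intro s hs t ht
  have := (hco s hs).trans (hco t ht).symm
  exact_mod_cast this

lemma key_order (p : ℕ) (hp : p.Prime) (hp3 : 3 ≤ p) (g : ℕ)
    (hg : ∀ u : ZMod p, u ≠ 0 → ∃ i : ℕ, (g : ZMod p) ^ i = u) :
    orderOf (g : ZMod p) = p - 1 := by
  haveI := Fact.mk hp
  have hd2 : ¬ p ∣ 2 := fun hd => by have := Nat.le_of_dvd (by norm_num) hd; omega
  have hd1 : ¬ p ∣ 1 := fun hd => by have := Nat.le_of_dvd one_pos hd; omega
  have h2ne : ((2:ℕ) : ZMod p) ≠ 0 := by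
    rw [Ne, ZMod.natCast_eq_zero_iff]; exact hd2
  have gne : (g : ZMod p) ≠ 0 := by
    intro h0
    obtain ⟨i, hi⟩ := hg ((2:ℕ) : ZMod p) h2ne
    rw [h0] at hi
    rcases Nat.eq_zero_or_pos i with h | h
    · subst h; simp at hi
      have : ((2:ℕ) : ZMod p) = ((1:ℕ) : ZMod p) := by exact_mod_cast hi.symm
      rw [ZMod.natCast_eq_natCast_iff] at this
      have := (Nat.modEq_iff_dvd' (by norm_num)).1 this.symm
      simpa using hd1 this
    · rw [zero_pow (by omega)] at hi
      exact h2ne hi.symm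
  have gu : IsUnit (g : ZMod p) := isUnit_iff_ne_zero.2 gne
  have horder : orderOf gu.unit = Nat.card (ZMod p)ˣ := by
    apply orderOf_eq_card_of_forall_mem_zpowers
    intro x
    obtain ⟨i, hi⟩ := hg (x : ZMod p) (Units.ne_zero x)
    refine ⟨(i : ℤ), ?_⟩
    apply Units.ext
    push_cast
    rw [← hi]
    simp [gu.unit_spec]
  rw [← orderOf_units, gu.unit_spec] at horder
  rw [horder, Nat.card_eq_fintype_card, ZMod.card_units]

theorem coeff_equality_of_galois_shift
    (p : ℕ) (hp : p.Prime) (g : ℕ)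
    (hg : ∀ u : ZMod p, u ≠ 0 → ∃ i : ℕ, (g : ZMod p) ^ i = u)
    (a : ℕ → ℤ)
    (h : (a 0 : ℂ) + ∑ i ∈ Finset.Icc 1 (p - 1), (a i : ℂ) * zeta p ^ (g ^ i)
        = (a 0 : ℂ) + ∑ i ∈ Finset.Icc 1 (p - 1), (a i : ℂ) * zeta p ^ (g ^ (i + 1))) :
    ∀ i ∈ Finset.Icc 1 (p - 1), ∀ j ∈ Finset.Icc 1 (p - 1), a i = a j := by
  intro i hi j hj
  rw [Finset.mem_Icc] at hi hj
  rcases lt_or_ge p 3 with hp2 | hp3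
  · -- p = 2 (or less): the index set is a singleton
    have : i = j := by omega
    rw [this]
  haveI := Fact.mk hp
  haveI : NeZero p := ⟨hp.pos.ne'⟩
  have hζ : IsPrimitiveRoot (zeta p) p := by
    have := Complex.isPrimitiveRoot_exp p hp.pos.ne'
    unfold zeta
    exact_mod_cast this
  have hord := key_order p hp hp3 g hg
  have gne : (g : ZMod p) ≠ 0 := by
    intro h0
    have h1 : (g : ZMod p) ^ (p - 1) = 1 := hord ▸ pow_orderOf_eq_one _
    rw [h0, zero_pow (by omega)] at h1
    exact zero_ne_one h1
  have gu : IsUnit (g : ZMod p) := isUnit_iff_ne_zero.2 gne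
  set c : ℕ → ℕ := fun n => ((g : ZMod p) ^ n).val with hc
  have hcval : ∀ n, c n < p := fun n => ZMod.val_lt _
  have hzmod : ∀ m : ℕ, zeta p ^ m = zeta p ^ (m % p) := by
    intro m
    conv_lhs => rw [← Nat.mod_add_div m p]
    rw [pow_add, pow_mul, hζ.pow_eq_one, one_pow, mul_one]
  have hzpow : ∀ n : ℕ, zeta p ^ (g ^ n) = zeta p ^ (c n) := by
    intro n
    rw [hzmod]
    congr 1
    simp only [hc]
    rw [← Nat.cast_pow, ZMod.val_natCast]
  have hcinj : ∀ s, 1 ≤ s → s ≤ p - 1 → ∀ t, 1 ≤ t → t ≤ p - 1 → c s = c t → s = t := by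
    intro s hs1 hs2 t ht1 ht2 hst
    have hval : (g : ZMod p) ^ s = (g : ZMod p) ^ t := by
      have h1 : (((c s : ℕ)) : ZMod p) = ((c t : ℕ) : ZMod p) := by rw [hst]
      simp only [hc] at h1
      rwa [ZMod.natCast_val, ZMod.natCast_val, ZMod.cast_id, ZMod.cast_id] at h1
    have hu : gu.unit ^ s = gu.unit ^ t := by
      apply Units.ext
      push_cast [gu.unit_spec]
      exact hval
    have hou : orderOf gu.unit = p - 1 := by
      rw [← hord, ← orderOf_units, gu.unit_spec]
    rw [pow_eq_pow_iff_modEq, hou] at hu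
    have hmod : s % (p - 1) = t % (p - 1) := hu
    rcases eq_or_lt_of_le hs2 with h | h
    · rcases eq_or_lt_of_le ht2 with h' | h'
      · omega
      · rw [h, Nat.mod_self, Nat.mod_eq_of_lt h'] at hmod; omega
    · rcases eq_or_lt_of_le ht2 with h' | h'
      · rw [h', Nat.mod_self, Nat.mod_eq_of_lt h] at hmod; omega
      · rw [Nat.mod_eq_of_lt h, Nat.mod_eq_of_lt h'] at hmod; omega
  -- cancel a 0, rewrite exponents
  have h' : ∑ i ∈ Finset.Icc 1 (p - 1), (a i : ℂ) * zeta p ^ (c i)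
      = ∑ i ∈ Finset.Icc 1 (p - 1), (a i : ℂ) * zeta p ^ (c (i + 1)) := by
    have h0 := add_left_cancel h
    calc ∑ i ∈ Finset.Icc 1 (p - 1), (a i : ℂ) * zeta p ^ (c i)
        = ∑ i ∈ Finset.Icc 1 (p - 1), (a i : ℂ) * zeta p ^ (g ^ i) := by
          refine Finset.sum_congr rfl fun i _ => ?_; rw [hzpow]
      _ = ∑ i ∈ Finset.Icc 1 (p - 1), (a i : ℂ) * zeta p ^ (g ^ (i + 1)) := h0
      _ = ∑ i ∈ Finset.Icc 1 (p - 1), (a i : ℂ) * zeta p ^ (c (i + 1)) := by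
          refine Finset.sum_congr rfl fun i _ => ?_; rw [hzpow]
  -- reindex the shifted sum
  set b : ℕ → ℤ := fun i => if i = 1 then a (p - 1) else a (i - 1) with hb
  have hcp : c p = c 1 := by
    simp only [hc]
    congr 1
    have h1 : (g : ZMod p) ^ (p - 1) = 1 := hord ▸ pow_orderOf_eq_one _
    calc (g : ZMod p) ^ p = (g : ZMod p) ^ (p - 1) * (g : ZMod p) ^ 1 := by
          rw [← pow_add]; congr 1; omega
      _ = (g : ZMod p) ^ 1 := by rw [h1, one_mul]
  have hshift : ∑ i ∈ Finset.Icc 1 (p - 1), (a i : ℂ) * zeta p ^ (c (i + 1))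
      = ∑ i ∈ Finset.Icc 1 (p - 1), (b i : ℂ) * zeta p ^ (c i) := by
    apply Finset.sum_nbij' (fun i => if i = p - 1 then 1 else i + 1)
      (fun j => if j = 1 then p - 1 else j - 1)
    · intro x hx; rw [Finset.mem_Icc] at hx ⊢; split <;> omega
    · intro x hx; rw [Finset.mem_Icc] at hx ⊢; split <;> omega
    · intro x hx; rw [Finset.mem_Icc] at hx; split <;> split <;> omega
    · intro x hx; rw [Finset.mem_Icc] at hx; split <;> split <;> omega
    · intro x hx
      rw [Finset.mem_Icc] at hx
      by_cases hx1 : x = p - 1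
      · rw [if_pos hx1]
        have hb1 : b 1 = a (p - 1) := by simp [hb]
        rw [hb1, hx1]
        congr 1
        rw [show p - 1 + 1 = p by omega, hcp]
      · rw [if_neg hx1]
        have hbb : b (x + 1) = a x := by
          simp only [hb]
          rw [if_neg (by omega)]
          simp
        rw [hbb]
  have hsum : ∑ i ∈ Finset.Icc 1 (p - 1), ((a i - b i : ℤ) : ℂ) * zeta p ^ (c i) = 0 := by
    have := h'.trans hshift
    rw [← sub_eq_zero] at this
    rw [← this, ← Finset.sum_sub_distrib]
    refine Finset.sum_congr rfl fun i _ => ?_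
    push_cast
    ring
  set d : ℕ → ℤ := fun i => a i - b i with hd
  set e : ℕ → ℤ := fun t => ∑ i ∈ Finset.Icc 1 (p - 1), if c i = t then d i else 0 with he
  have hesum : ∑ t ∈ Finset.range p, (e t : ℂ) * zeta p ^ t = 0 := by
    have step1 : ∀ t, (e t : ℂ) = ∑ i ∈ Finset.Icc 1 (p - 1), if c i = t then (d i : ℂ) else 0 := by
      intro t
      simp only [he]
      push_cast [apply_ite (Int.cast : ℤ → ℂ)]
      rfl
    calc ∑ t ∈ Finset.range p, (e t : ℂ) * zeta p ^ t
        = ∑ t ∈ Finset.range p, ∑ i ∈ Finset.Icc 1 (p - 1),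
            (if c i = t then (d i : ℂ) else 0) * zeta p ^ t := by
          refine Finset.sum_congr rfl fun t _ => ?_
          rw [step1, Finset.sum_mul]
      _ = ∑ i ∈ Finset.Icc 1 (p - 1), ∑ t ∈ Finset.range p,
            (if c i = t then (d i : ℂ) else 0) * zeta p ^ t := Finset.sum_comm
      _ = ∑ i ∈ Finset.Icc 1 (p - 1), (d i : ℂ) * zeta p ^ (c i) := by
          refine Finset.sum_congr rfl fun i _ => ?_
          rw [Finset.sum_eq_single (c i)]
          · simp
          · intro t _ ht; rw [if_neg (Ne.symm ht), zero_mul]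
          · intro ht; exact absurd (Finset.mem_range.2 (hcval i)) ht
      _ = 0 := hsum
  have hkey := key_coeffs p hp (zeta p) hζ e hesum
  have he0 : e 0 = 0 := by
    simp only [he]
    apply Finset.sum_eq_zero
    intro i _
    rw [if_neg]
    intro hci
    have : (g : ZMod p) ^ i = 0 := by
      rw [← ZMod.val_eq_zero]
      exact hci
    exact pow_ne_zero i gne this
  have hez : ∀ t, t < p → e t = 0 := fun t ht => (hkey t ht 0 hp.pos).trans he0
  have hab : ∀ k, 1 ≤ k → k ≤ p - 1 → a k = b k := by
    intro k hk1 hk2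
    have hek : e (c k) = d k := by
      simp only [he]
      rw [Finset.sum_eq_single_of_mem k (Finset.mem_Icc.2 ⟨hk1, hk2⟩)]
      · rw [if_pos rfl]
      · intro t ht hne
        rw [Finset.mem_Icc] at ht
        rw [if_neg]
        intro hct
        exact hne (hcinj t ht.1 ht.2 k hk1 hk2 hct)
    have := (hez (c k) (hcval k)).symm.trans hek
    simp only [hd] at this
    omega
  have ha1 : ∀ k, 1 ≤ k → k ≤ p - 1 → a k = a 1 := by
    intro k
    induction k with
    | zero => omega
    | succ n ih =>
      intro hk1 hk2
      rcases Nat.eq_zero_or_pos n with h0 | h1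
      · rw [h0]
      · have hbn := hab (n + 1) hk1 hk2
        rw [hbn]
        have : b (n + 1) = a n := by
          simp only [hb]
          rw [if_neg (by omega)]
          simp
        rw [this]
        exact ih h1 (by omega)
  rw [ha1 i hi.1 hi.2, ha1 j hj.1 hj.2]
end

section
/- For every prime power k = p^m (p prime, m ≥ 1), the complexity of 1 in base ζ_k equals k; that is, ‖1‖_{p^m} = p^m. -/
open Polynomial

/-- Expression for `z ^ (n+1)`. -/
def epow : ℕ → Expr
  | 0 => .x
  | n + 1 => .mul (epow n) .x

lemma epow_size (n : ℕ) : (epow n).size = n + 1 := by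
  induction n with
  | zero => rfl
  | succ n ih => simp [epow, Expr.size, ih]

lemma epow_eval {R : Type*} [Monoid R] [Add R] (z : R) (n : ℕ) :
    (epow n).eval z = z ^ (n + 1) := by
  induction n with
  | zero => simp [epow, Expr.eval]
  | succ n ih => simp [epow, Expr.eval, ih, pow_succ]

lemma expr_poly_coeff_nonneg (e : Expr) (n : ℕ) :
    0 ≤ (e.eval (X : ℤ[X])).coeff n := by
  induction e generalizing n with
  | x => rw [Expr.eval, coeff_X]; split <;> norm_num
  | add a b ha hb => rw [Expr.eval, coeff_add]; exact add_nonneg (ha n) (hb n)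
  | mul a b ha hb =>
    rw [Expr.eval, coeff_mul]
    exact Finset.sum_nonneg fun i _ => mul_nonneg (ha i.1) (hb i.2)

lemma expr_poly_coeff_zero (e : Expr) : (e.eval (X : ℤ[X])).coeff 0 = 0 := by
  induction e with
  | x => simp [Expr.eval]
  | add a b ha hb => rw [Expr.eval, coeff_add, ha, hb]; ring
  | mul a b ha hb => rw [Expr.eval, mul_coeff_zero, ha, hb]; ring

lemma expr_poly_natDegree_le (e : Expr) : (e.eval (X : ℤ[X])).natDegree ≤ e.size := by
  induction e with
  | x => simp [Expr.eval, Expr.size]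
  | add a b ha hb =>
    rw [Expr.eval, Expr.size]
    exact le_trans (natDegree_add_le _ _) (max_le (le_trans ha (Nat.le_add_right _ _))
      (le_trans hb (Nat.le_add_left _ _)))
  | mul a b ha hb =>
    rw [Expr.eval, Expr.size]
    exact le_trans (natDegree_mul_le) (Nat.add_le_add ha hb)

lemma expr_poly_aeval (e : Expr) (z : ℂ) :
    Polynomial.aeval z (e.eval (X : ℤ[X])) = e.eval z := by
  induction e with
  | x => simp [Expr.eval]
  | add a b ha hb => rw [Expr.eval, Expr.eval, map_add, ha, hb]
  | mul a b ha hb => rw [Expr.eval, Expr.eval, map_mul, ha, hb]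

/-- Key lower bound: any integer polynomial with nonnegative coefficients, zero
constant term, evaluating to `1` at `ζ_{p^m}`, has degree at least `p^m`. -/
lemma key_lower (p m : ℕ) (hp : p.Prime) (hm : 1 ≤ m) (f : ℤ[X])
    (h0 : f.coeff 0 = 0) (hpos : ∀ n, 0 ≤ f.coeff n)
    (hf : Polynomial.aeval (zeta (p ^ m)) f = 1) : p ^ m ≤ f.natDegree := by
  set k := p ^ m with hk
  have hk0 : k ≠ 0 := pow_ne_zero _ hp.pos.ne'
  have hk2 : 2 ≤ k := by
    calc 2 ≤ p := hp.two_le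
    _ = p ^ 1 := (pow_one p).symm
    _ ≤ p ^ m := Nat.pow_le_pow_right hp.pos hm
  have hprim : IsPrimitiveRoot (zeta k) k := Complex.isPrimitiveRoot_exp k hk0
  -- divisibility by the cyclotomic polynomial
  have haeval : Polynomial.aeval (zeta k) ((f - 1).map (algebraMap ℤ ℚ)) = 0 := by
    rw [aeval_map_algebraMap, map_sub, hf, map_one, sub_self]
  have hdvd' : minpoly ℚ (zeta k) ∣ (f - 1).map (algebraMap ℤ ℚ) :=
    minpoly.dvd ℚ _ haeval
  rw [← Polynomial.cyclotomic_eq_minpoly_rat hprim (Nat.pos_of_ne_zero hk0),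
    ← Polynomial.map_cyclotomic k (algebraMap ℤ ℚ)] at hdvd'
  have hdvd : cyclotomic k ℤ ∣ f - 1 :=
    (Polynomial.map_dvd_map (algebraMap ℤ ℚ)
      (fun a b h => by exact_mod_cast h) (cyclotomic.monic k ℤ)).mp hdvd'
  obtain ⟨g, hg⟩ := hdvd
  -- basic nonvanishing facts
  have hfne : f - 1 ≠ 0 := by
    intro h
    have : f = 1 := by linear_combination (norm := ring_nf) h
    rw [this] at h0; simp at h0
  have hgne : g ≠ 0 := by rintro rfl; rw [mul_zero] at hg; exact hfne hg
  have hcycne : cyclotomic k ℤ ≠ 0 := (cyclotomic.monic k ℤ).ne_zero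
  -- constant coefficient of g is -1
  have hg0 : g.coeff 0 = -1 := by
    have := congrArg (fun q : ℤ[X] => q.coeff 0) hg
    simp only [coeff_sub, h0, mul_coeff_zero, Polynomial.coeff_one,
      cyclotomic_coeff_zero ℤ hk2, one_mul] at this
    simpa using this.symm
  -- degrees
  set q := p ^ (m - 1) with hq
  have hq0 : 0 < q := pow_pos hp.pos _
  have hdegcyc : (cyclotomic k ℤ).natDegree = k - q := by
    rw [natDegree_cyclotomic, hk, Nat.totient_prime_pow hp hm, hq,
      Nat.mul_sub, mul_one, ← pow_succ, Nat.sub_add_cancel hm]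
  by_contra hlt
  push_neg at hlt
  have hdegf1 : (f - 1).natDegree = f.natDegree := by
    have : f - 1 = f - C 1 := by simp
    rw [this, natDegree_sub_C]
  have hdegmul : (f - 1).natDegree = (cyclotomic k ℤ).natDegree + g.natDegree := by
    rw [hg, natDegree_mul hcycne hgne]
  have hdegg : g.natDegree < q := by
    have h1 : (cyclotomic k ℤ).natDegree + g.natDegree < k := by
      rw [← hdegmul, hdegf1]; exact hlt
    rw [hdegcyc] at h1
    omega
  -- cyclotomic as geometric sum
  obtain ⟨m', rfl⟩ : ∃ m', m = m' + 1 := ⟨m - 1, (Nat.sub_add_cancel hm).symm⟩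
  have hqeq : q = p ^ m' := by rw [hq]; norm_num
  have hcyc : cyclotomic k ℤ = ∑ i ∈ Finset.range p, (X : ℤ[X]) ^ (q * i) := by
    rw [hk, cyclotomic_prime_pow_eq_geom_sum hp]
    refine Finset.sum_congr rfl fun i _ => ?_
    rw [← pow_mul]
    try rw [hqeq]
  -- coefficient of X^q in f is -1, contradiction
  have hfq : f.coeff q = -1 := by
    have hfeq : f = cyclotomic k ℤ * g + 1 := by linear_combination (norm := ring_nf) hg
    rw [hfeq, coeff_add, Polynomial.coeff_one, if_neg hq0.ne', add_zero, hcyc,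
      Finset.sum_mul, Polynomial.finset_sum_coeff]
    have : ∀ i ∈ Finset.range p, ((X : ℤ[X]) ^ (q * i) * g).coeff q
        = if i = 1 then -1 else 0 := by
      intro i _
      rw [mul_comm, coeff_mul_X_pow']
      rcases i with _ | _ | i
      · simp [coeff_eq_zero_of_natDegree_lt hdegg]
      · simp [hg0]
      · have : ¬ q * (i + 2) ≤ q := by nlinarith
        simp [this]
    rw [Finset.sum_congr rfl this, Finset.sum_ite_eq' (Finset.range p) 1 (fun _ => (-1 : ℤ))]
    rw [if_pos (Finset.mem_range.mpr hp.two_le)]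
  have := hpos q
  omega

theorem complexity_one_prime_pow (p m : ℕ) (hp : p.Prime) (hm : 1 ≤ m) :
    complexity (zeta (p ^ m)) 1 = p ^ m := by
  set k := p ^ m with hk
  have hk0 : k ≠ 0 := pow_ne_zero _ hp.pos.ne'
  have hzpow : zeta k ^ k = 1 := by
    rw [zeta, ← Complex.exp_nat_mul]
    have : (k : ℂ) ≠ 0 := Nat.cast_ne_zero.mpr hk0
    rw [mul_div_cancel₀ _ this, Complex.exp_two_pi_mul_I]
  have hmem : k ∈ {n | ∃ e : Expr, e.size = n ∧ e.eval (zeta k) = 1} := by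
    refine ⟨epow (k - 1), ?_, ?_⟩
    · rw [epow_size]; omega
    · rw [epow_eval]
      have : k - 1 + 1 = k := by omega
      rw [this, hzpow]
  have hlb : ∀ n ∈ {n | ∃ e : Expr, e.size = n ∧ e.eval (zeta k) = 1}, k ≤ n := by
    rintro n ⟨e, rfl, he⟩
    have h := key_lower p m hp hm (e.eval Polynomial.X)
      (expr_poly_coeff_zero e) (expr_poly_coeff_nonneg e)
      (by rw [expr_poly_aeval, he])
    exact le_trans h (expr_poly_natDegree_le e)
  exact le_antisymm (Nat.sInf_le hmem) (le_csInf ⟨k, hmem⟩ hlb)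
end

section
/- If k is an even natural number with k ≥ 2, then the complexity of 0 in base ζ_k equals k/2 + 2. -/
lemma Expr.one_le_size : ∀ e : Expr, 1 ≤ e.size := by
  intro e
  induction e with
  | x => simp [Expr.size]
  | add a b iha ihb => simp [Expr.size]; omega
  | mul a b iha ihb => simp [Expr.size]; omega

open Polynomial in
/-- Every expression value is `P(z)` for a nonzero `ℕ`-polynomial with support in `[1, size]`. -/
lemma Expr.exists_poly (z : ℂ) : ∀ e : Expr, ∃ P : Polynomial ℕ,
    P ≠ 0 ∧ 1 ≤ P.natTrailingDegree ∧ P.natDegree ≤ e.size ∧ aeval z P = e.eval z := by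
  intro e
  induction e with
  | x =>
    exact ⟨X, X_ne_zero, by simp [natTrailingDegree_X], by simp [natDegree_X, Expr.size],
      by simp [Expr.eval]⟩
  | add a b iha ihb =>
    obtain ⟨P, hP0, hP1, hPd, hPe⟩ := iha
    obtain ⟨Q, hQ0, hQ1, hQd, hQe⟩ := ihb
    have hne : P + Q ≠ 0 := by
      intro h
      apply hP0
      ext n
      have h' : P.coeff n + Q.coeff n = 0 := by
        have := Polynomial.ext_iff.mp h n
        simpa using this
      simpa using Nat.eq_zero_of_add_eq_zero_right h'
    refine ⟨P + Q, hne, ?_, ?_, ?_⟩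
    · refine le_natTrailingDegree hne fun m hm => ?_
      interval_cases m
      rw [Polynomial.coeff_add, coeff_eq_zero_of_lt_natTrailingDegree (by omega),
        coeff_eq_zero_of_lt_natTrailingDegree (by omega)]
      rfl
    · calc (P + Q).natDegree ≤ max P.natDegree Q.natDegree := natDegree_add_le P Q
        _ ≤ a.size + b.size := by
          have hb := b.one_le_size
          have ha := a.one_le_size
          omega
        _ = (Expr.add a b).size := rfl
    · rw [map_add, hPe, hQe]; rfl
  | mul a b iha ihb =>
    obtain ⟨P, hP0, hP1, hPd, hPe⟩ := iha
    obtain ⟨Q, hQ0, hQ1, hQd, hQe⟩ := ihb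
    refine ⟨P * Q, mul_ne_zero hP0 hQ0, ?_, ?_, ?_⟩
    · have := le_natTrailingDegree_mul (mul_ne_zero hP0 hQ0) (p := P) (q := Q)
      omega
    · rw [natDegree_mul hP0 hQ0]
      show P.natDegree + Q.natDegree ≤ a.size + b.size
      omega
    · rw [map_mul, hPe, hQe]; rfl

lemma zeta_pow (k : ℕ) (hk : k ≠ 0) (m : ℕ) :
    zeta k ^ m = Complex.exp ((2 * Real.pi * m / k : ℝ) * Complex.I) := by
  rw [zeta, ← Complex.exp_nat_mul]
  congr 1
  push_cast
  have : (k : ℂ) ≠ 0 := by exact_mod_cast hk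
  field_simp

lemma zeta_pow_im (k : ℕ) (hk : k ≠ 0) (m : ℕ) :
    (zeta k ^ m).im = Real.sin (2 * Real.pi * m / k) := by
  rw [zeta_pow k hk m, Complex.exp_ofReal_mul_I_im]

lemma zeta_pow_re (k : ℕ) (hk : k ≠ 0) (m : ℕ) :
    (zeta k ^ m).re = Real.cos (2 * Real.pi * m / k) := by
  rw [zeta_pow k hk m, Complex.exp_ofReal_mul_I_re]

open Polynomial in
/-- Values of nonzero `ℕ`-polynomials with support in `[1, k/2]` at `ζ_k` lie in the
closed upper half plane, and if real they are negative. -/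
lemma poly_value_upper (k : ℕ) (hk : Even k) (hk2 : 2 ≤ k) (P : Polynomial ℕ)
    (hP0 : P ≠ 0) (hP1 : 1 ≤ P.natTrailingDegree) (hPd : P.natDegree ≤ k / 2) :
    0 ≤ (aeval (zeta k) P).im ∧ ((aeval (zeta k) P).im = 0 → (aeval (zeta k) P).re < 0) := by
  have hkpos : (0 : ℝ) < k := by positivity
  have hk0 : k ≠ 0 := by omega
  have haeval : (aeval (zeta k) P : ℂ) = ∑ n ∈ P.support, (P.coeff n : ℂ) * zeta k ^ n := by
    rw [aeval_def, eval₂_eq_sum, Polynomial.sum_def]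
    simp [Algebra.smul_def]
  -- facts about each exponent in the support
  have hmem : ∀ n ∈ P.support, 0 < 2 * Real.pi * n / k ∧ 2 * Real.pi * n / k ≤ Real.pi := by
    intro n hn
    have h1 : 1 ≤ n := le_trans hP1 (natTrailingDegree_le_of_mem_supp n hn)
    have h2 : n ≤ k / 2 := le_trans (le_natDegree_of_mem_supp n hn) hPd
    have h2' : 2 * n ≤ k := by omega
    constructor
    · have : (0:ℝ) < (n : ℝ) := by exact_mod_cast h1
      positivity
    · rw [div_le_iff₀ hkpos]
      have : (2 * n : ℝ) ≤ k := by exact_mod_cast h2'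
      nlinarith [Real.pi_pos]
  have him : (aeval (zeta k) P).im = ∑ n ∈ P.support, (P.coeff n : ℝ) * Real.sin (2 * Real.pi * n / k) := by
    rw [haeval, Complex.im_sum]
    refine Finset.sum_congr rfl fun n hn => ?_
    rw [Complex.mul_im, zeta_pow_im k hk0 n]
    simp
  have hterm_nonneg : ∀ n ∈ P.support, 0 ≤ (P.coeff n : ℝ) * Real.sin (2 * Real.pi * n / k) := by
    intro n hn
    obtain ⟨h1, h2⟩ := hmem n hn
    exact mul_nonneg (by positivity) (Real.sin_nonneg_of_nonneg_of_le_pi h1.le h2)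
  constructor
  · rw [him]; exact Finset.sum_nonneg hterm_nonneg
  · intro h0
    rw [him] at h0
    have hzero := (Finset.sum_eq_zero_iff_of_nonneg hterm_nonneg).mp h0
    -- each n in the support satisfies 2πn/k = π, hence cos = -1
    have hcos : ∀ n ∈ P.support, Real.cos (2 * Real.pi * n / k) = -1 := by
      intro n hn
      obtain ⟨h1, h2⟩ := hmem n hn
      have hc : (P.coeff n : ℝ) ≠ 0 := by
        have := mem_support_iff.mp hn
        exact_mod_cast this
      have hsin : Real.sin (2 * Real.pi * n / k) = 0 := by
        have := hzero n hn
        rcases mul_eq_zero.mp this with h | h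
        · exact absurd h hc
        · exact h
      have : 2 * Real.pi * n / k = Real.pi := by
        by_contra hne
        have hlt : 2 * Real.pi * n / k < Real.pi := lt_of_le_of_ne h2 hne
        exact absurd hsin (ne_of_gt (Real.sin_pos_of_pos_of_lt_pi h1 hlt))
      rw [this, Real.cos_pi]
    have hre : (aeval (zeta k) P).re = ∑ n ∈ P.support, (P.coeff n : ℝ) * Real.cos (2 * Real.pi * n / k) := by
      rw [haeval, Complex.re_sum]
      refine Finset.sum_congr rfl fun n hn => ?_
      rw [Complex.mul_re, zeta_pow_im k hk0 n, zeta_pow_re k hk0 n]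
      simp
    rw [hre]
    have hne : P.support.Nonempty := nonempty_support_iff.mpr hP0
    calc ∑ n ∈ P.support, (P.coeff n : ℝ) * Real.cos (2 * Real.pi * n / k)
        = ∑ n ∈ P.support, -(P.coeff n : ℝ) := by
          refine Finset.sum_congr rfl fun n hn => ?_
          rw [hcos n hn]; ring
      _ < ∑ n ∈ P.support, (0 : ℝ) := by
          refine Finset.sum_lt_sum_of_nonempty hne fun n hn => ?_
          have := mem_support_iff.mp hn
          have : 1 ≤ P.coeff n := Nat.one_le_iff_ne_zero.mpr this
          have : (1:ℝ) ≤ (P.coeff n : ℝ) := by exact_mod_cast this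
          linarith
      _ = 0 := Finset.sum_const_zero

/-- No expression of size at most `k/2 + 1` evaluates to 0. -/
lemma Expr.eval_ne_zero (k : ℕ) (hk : Even k) (hk2 : 2 ≤ k) :
    ∀ e : Expr, e.size ≤ k / 2 + 1 → e.eval (zeta k) ≠ 0 := by
  intro e
  induction e with
  | x =>
    intro _ h
    exact Complex.exp_ne_zero _ h
  | add a b iha ihb =>
    intro hs h
    have ha1 := a.one_le_size
    have hb1 := b.one_le_size
    have hsize : (Expr.add a b).size = a.size + b.size := rfl
    have hsa : a.size ≤ k / 2 := by rw [hsize] at hs; omega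
    have hsb : b.size ≤ k / 2 := by rw [hsize] at hs; omega
    obtain ⟨P, hP0, hP1, hPd, hPe⟩ := a.exists_poly (zeta k)
    obtain ⟨Q, hQ0, hQ1, hQd, hQe⟩ := b.exists_poly (zeta k)
    obtain ⟨hPim, hPre⟩ := poly_value_upper k hk hk2 P hP0 hP1 (le_trans hPd hsa)
    obtain ⟨hQim, hQre⟩ := poly_value_upper k hk hk2 Q hQ0 hQ1 (le_trans hQd hsb)
    rw [hPe] at hPim hPre
    rw [hQe] at hQim hQre
    have heval : (Expr.add a b).eval (zeta k) = a.eval (zeta k) + b.eval (zeta k) := rfl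
    rw [heval] at h
    have him : (a.eval (zeta k)).im + (b.eval (zeta k)).im = 0 := by
      have := congrArg Complex.im h
      simpa using this
    have hia : (a.eval (zeta k)).im = 0 := by linarith
    have hib : (b.eval (zeta k)).im = 0 := by linarith
    have hra := hPre hia
    have hrb := hQre hib
    have hre : (a.eval (zeta k)).re + (b.eval (zeta k)).re = 0 := by
      have := congrArg Complex.re h
      simpa using this
    linarith
  | mul a b iha ihb =>
    intro hs h
    have ha1 := a.one_le_size
    have hb1 := b.one_le_size
    have hsize : (Expr.mul a b).size = a.size + b.size := rfl
    have heval : (Expr.mul a b).eval (zeta k) = a.eval (zeta k) * b.eval (zeta k) := rfl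
    rw [heval] at h
    rcases mul_eq_zero.mp h with h' | h'
    · exact iha (by rw [hsize] at hs; omega) h'
    · exact ihb (by rw [hsize] at hs; omega) h'

/-- `npow n` is an expression of size `n + 1` evaluating to `z ^ (n + 1)`. -/
def Expr.npow : ℕ → Expr
  | 0 => Expr.x
  | n + 1 => Expr.mul Expr.x (Expr.npow n)

lemma Expr.npow_size (n : ℕ) : (Expr.npow n).size = n + 1 := by
  induction n with
  | zero => rfl
  | succ m ih => show 1 + (Expr.npow m).size = m + 1 + 1; omega

lemma Expr.npow_eval (z : ℂ) (n : ℕ) : (Expr.npow n).eval z = z ^ (n + 1) := by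
  induction n with
  | zero => simp [Expr.npow, Expr.eval]
  | succ m ih =>
    show z * (Expr.npow m).eval z = z ^ (m + 1 + 1)
    rw [ih]; ring

lemma zeta_pow_half (k : ℕ) (hk : Even k) (hk2 : 2 ≤ k) : zeta k ^ (k / 2) = -1 := by
  have hk0 : k ≠ 0 := by omega
  rw [zeta_pow k hk0 (k / 2)]
  have hhalf : (2 : ℝ) * (k / 2 : ℕ) = k := by
    have : 2 * (k / 2) = k := Nat.two_mul_div_two_of_even hk
    exact_mod_cast this
  have harg : 2 * Real.pi * ((k / 2 : ℕ) : ℝ) / k = Real.pi := by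
    have hkpos : (0 : ℝ) < k := by positivity
    rw [div_eq_iff hkpos.ne']
    linear_combination Real.pi * hhalf
  rw [harg]
  simpa using Complex.exp_pi_mul_I

theorem complexity_zero_even (k : ℕ) (hk : Even k) (hk2 : 2 ≤ k) :
    complexity (zeta k) 0 = k / 2 + 2 := by
  have hhalf1 : 1 ≤ k / 2 := by omega
  -- the witness expression: x + x * x^(k/2)
  obtain ⟨m, hm⟩ : ∃ m, k / 2 = m + 1 := ⟨k / 2 - 1, by omega⟩
  set E : Expr := Expr.add Expr.x (Expr.mul Expr.x (Expr.npow m)) with hE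
  have hEsize : E.size = k / 2 + 2 := by
    show Expr.x.size + (Expr.x.size + (Expr.npow m).size) = k / 2 + 2
    rw [Expr.npow_size]
    show 1 + (1 + (m + 1)) = k / 2 + 2
    omega
  have hEeval : E.eval (zeta k) = 0 := by
    show zeta k + zeta k * (Expr.npow m).eval (zeta k) = 0
    rw [Expr.npow_eval, ← hm, zeta_pow_half k hk hk2]
    ring
  have hmem : k / 2 + 2 ∈ {n | ∃ e : Expr, e.size = n ∧ e.eval (zeta k) = 0} :=
    ⟨E, hEsize, hEeval⟩
  refine le_antisymm (Nat.sInf_le hmem) (le_csInf ⟨_, hmem⟩ ?_)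
  rintro n ⟨e, hsize, heval⟩
  by_contra hlt
  push_neg at hlt
  exact Expr.eval_ne_zero k hk hk2 e (by omega) heval
end

section
/- For every even k ≥ 2 and p the smallest odd prime factor of k (assuming k has an odd prime factor), ‖1‖_k ≤ k − k/(2p) + p − 2. Consequently, if k > 2p² − 4p then ‖1‖_k < k. -/
namespace CAux

/-- `P n` is `x^(n+1)`. -/
def P : ℕ → Expr
  | 0 => .x
  | n+1 => .mul .x (P n)

@[simp] lemma P_size (n : ℕ) : (P n).size = n + 1 := by
  induction n with
  | zero => rfl
  | succ n ih => simp [P, Expr.size, ih]; omega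

@[simp] lemma P_eval (z : ℂ) (n : ℕ) : (P n).eval z = z ^ (n+1) := by
  induction n with
  | zero => simp [P, Expr.eval]
  | succ n ih => rw [pow_succ]; simp [P, Expr.eval, ih]; ring

/-- multiply by `x^d` (omitting when `d = 0`). -/
def MP : ℕ → Expr → Expr
  | 0, e => e
  | n+1, e => .mul (P n) e

lemma MP_size (d : ℕ) (e : Expr) : (MP d e).size = d + e.size := by
  cases d <;> simp [MP, Expr.size]

lemma MP_eval (z : ℂ) (d : ℕ) (e : Expr) : (MP d e).eval z = z ^ d * e.eval z := by
  cases d with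
  | zero => simp [MP]
  | succ n => simp [MP, Expr.eval]

/-- Horner-style expression for `∑_{j=0}^{n} z^(g (i+j) - c)`. -/
def W (g : ℕ → ℕ) : ℕ → ℕ → ℕ → Expr
  | 0, i, c => P (g i - c - 1)
  | n+1, i, c => MP (g i - c - 1) (.add .x (W g n (i+1) (g i - 1)))

lemma W_size (g : ℕ → ℕ) (hg : StrictMono g) :
    ∀ n i c, c < g i → (W g n i c).size = g (i + n) - c + n := by
  intro n
  induction n with
  | zero => intro i c hc; simp [W]; omega
  | succ n ih =>
    intro i c hc
    have h1 : g i < g (i+1) := hg (by omega)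
    have h2 : g (i+1) ≤ g (i+1+n) := hg.monotone (by omega)
    rw [show i + (n+1) = i + 1 + n from by omega]
    rw [W, MP_size]
    simp only [Expr.size]
    rw [ih (i+1) (g i - 1) (by omega)]
    omega

lemma W_eval (g : ℕ → ℕ) (hg : StrictMono g) (z : ℂ) :
    ∀ n i c, c < g i →
      (W g n i c).eval z = ∑ j ∈ Finset.range (n+1), z ^ (g (i+j) - c) := by
  intro n
  induction n with
  | zero =>
    intro i c hc
    simp [W]
    congr 1
    omega
  | succ n ih =>
    intro i c hc
    have h1 : g i < g (i+1) := hg (by omega)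
    rw [W, MP_eval]
    simp only [Expr.eval]
    rw [ih (i+1) (g i - 1) (by omega)]
    rw [Finset.sum_range_succ' (fun j => z ^ (g (i+j) - c)) (n+1)]
    rw [mul_add, Finset.mul_sum]
    rw [add_comm]
    congr 1
    · apply Finset.sum_congr rfl
      intro j hj
      rw [← pow_add]
      congr 1
      have h2 : g (i+1) ≤ g (i+1+j) := hg.monotone (by omega)
      have h4 : i + (j+1) = i + 1 + j := by omega
      rw [h4]
      omega
    · rw [← pow_succ]
      simp only [Nat.add_zero]
      congr 1
      omega

end CAux

theorem complexity_one_even_upper_bound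
    (k p : ℕ) (hk : Even k) (hk2 : 2 ≤ k)
    (hp : p.Prime) (hodd : Odd p) (hdvd : p ∣ k)
    (hmin : ∀ q : ℕ, q.Prime → Odd q → q ∣ k → p ≤ q) :
    complexity (zeta k) 1 ≤ k - k / (2 * p) + p - 2 ∧
      (2 * p ^ 2 - 4 * p < k → complexity (zeta k) 1 < k) := by
  classical
  have hp2 : 2 ≤ p := hp.two_le
  have hpodd : p % 2 = 1 := Nat.odd_iff.mp hodd
  have hp3 : 3 ≤ p := by omega
  have hcop : Nat.Coprime 2 p := (Nat.prime_two.coprime_iff_not_dvd).mpr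
    (by rintro ⟨c, hc⟩; omega)
  have h2dvd : 2 ∣ k := by rcases hk with ⟨r, hr⟩; exact ⟨r, by omega⟩
  obtain ⟨m, hkm⟩ := hcop.mul_dvd_of_dvd_of_dvd h2dvd hdvd
  have hm1 : 1 ≤ m := by
    rcases Nat.eq_zero_or_pos m with h | h
    · subst h; omega
    · exact h
  have hdivk : k / (2 * p) = m := by rw [hkm, Nat.mul_div_cancel_left _ (by omega)]
  set q := (p - 1) / 2 with hq
  set g : ℕ → ℕ := fun j => (if j < q then 2 * j + 1 else 2 * j + 3) * m with hgdef
  have hgmono : StrictMono g := by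
    intro a b hab
    simp only [hgdef]
    have h : (if a < q then 2 * a + 1 else 2 * a + 3) <
        (if b < q then 2 * b + 1 else 2 * b + 3) := by split_ifs <;> omega
    exact Nat.mul_lt_mul_of_pos_right h (by omega)
  have hc0 : (0 : ℕ) < g 0 := by
    simp only [hgdef]
    exact Nat.mul_pos (by split_ifs <;> omega) (by omega)
  set E := CAux.W g (p - 2) 0 0 with hE
  have hsize : E.size = (2 * p - 1) * m + (p - 2) := by
    rw [hE, CAux.W_size g hgmono (p - 2) 0 0 hc0]
    have hg2 : g (0 + (p - 2)) = (2 * p - 1) * m := by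
      simp only [hgdef, Nat.zero_add]
      rw [if_neg (by omega)]
      congr 1
      omega
    omega
  -- the root of unity w = exp(π i / p)
  set w : ℂ := Complex.exp (↑Real.pi * Complex.I / p) with hw
  have hp0 : (p : ℂ) ≠ 0 := Nat.cast_ne_zero.mpr (by omega)
  have hzm : zeta k ^ m = w := by
    rw [zeta, ← Complex.exp_nat_mul, hw]
    congr 1
    have hkc : (k : ℂ) = 2 * p * m := by exact_mod_cast congrArg (Nat.cast (R := ℂ)) hkm
    have hm0 : (m : ℂ) ≠ 0 := Nat.cast_ne_zero.mpr (by omega)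
    rw [hkc]
    field_simp
    try ring
  have hwp : w ^ p = -1 := by
    rw [hw, ← Complex.exp_nat_mul,
      show (p : ℂ) * (↑Real.pi * Complex.I / p) = ↑Real.pi * Complex.I from by field_simp]
    exact Complex.exp_pi_mul_I
  have hw2eq : w ^ 2 = Complex.exp (2 * ↑Real.pi * Complex.I / p) := by
    rw [hw, sq, ← Complex.exp_add]
    congr 1
    field_simp
    try ring
  have hw2 : w ^ 2 ≠ 1 := by
    rw [hw2eq]
    exact (Complex.isPrimitiveRoot_exp p (by omega)).ne_one (by omega)
  have hw2p : (w ^ 2) ^ p = 1 := by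
    rw [← pow_mul, mul_comm, pow_mul, hwp]
    norm_num
  have hS : ∑ j ∈ Finset.range p, w ^ (2 * j + 1) = 0 := by
    calc ∑ j ∈ Finset.range p, w ^ (2 * j + 1)
        = ∑ j ∈ Finset.range p, (w ^ 2) ^ j * w := by
          refine Finset.sum_congr rfl fun j _ => ?_
          rw [pow_add, pow_mul, pow_one]
      _ = (∑ j ∈ Finset.range p, (w ^ 2) ^ j) * w := by rw [Finset.sum_mul]
      _ = 0 := by rw [geom_sum_eq hw2, hw2p]; simp
  have hfin : (∑ j ∈ Finset.range q, w ^ (2 * j + 1)) +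
      (∑ j ∈ Finset.range q, w ^ (2 * (q + j) + 3)) = 1 := by
    have hps : ∑ j ∈ Finset.range p, w ^ (2 * j + 1)
        = (∑ j ∈ Finset.range q, w ^ (2 * j + 1)) +
          ((∑ j ∈ Finset.range q, w ^ (2 * (q + j) + 3)) + w ^ (2 * q + 1)) := by
      rw [show p = q + (q + 1) from by omega, Finset.sum_range_add]
      congr 1
      rw [Finset.sum_range_succ' (fun j => w ^ (2 * (q + j) + 1)) q]
      have e1 : ∀ j : ℕ, 2 * (q + (j + 1)) + 1 = 2 * (q + j) + 3 := fun j => by omega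
      have e2 : 2 * (q + 0) + 1 = 2 * q + 1 := by omega
      simp only [e1, e2]
    rw [hS, show 2 * q + 1 = p from by omega, hwp] at hps
    linear_combination -hps
  have heval : E.eval (zeta k) = 1 := by
    rw [hE, CAux.W_eval g hgmono (zeta k) (p - 2) 0 0 hc0]
    calc ∑ j ∈ Finset.range (p - 2 + 1), zeta k ^ (g (0 + j) - 0)
        = ∑ j ∈ Finset.range (q + q), w ^ (if j < q then 2 * j + 1 else 2 * j + 3) := by
          rw [show p - 2 + 1 = q + q from by omega]
          refine Finset.sum_congr rfl fun j _ => ?_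
          rw [Nat.zero_add, Nat.sub_zero]
          simp only [hgdef]
          rw [mul_comm, pow_mul, hzm]
      _ = (∑ j ∈ Finset.range q, w ^ (2 * j + 1)) +
          (∑ j ∈ Finset.range q, w ^ (2 * (q + j) + 3)) := by
          rw [Finset.sum_range_add]
          congr 1
          · exact Finset.sum_congr rfl fun j hj =>
              by rw [if_pos (Finset.mem_range.mp hj)]
          · exact Finset.sum_congr rfl fun j _ => by rw [if_neg (by omega)]
      _ = 1 := hfin
  have hb : complexity (zeta k) 1 ≤ (2 * p - 1) * m + (p - 2) :=
    Nat.sInf_le ⟨E, hsize, heval⟩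
  have hk' : (2 * p - 1) * m + m = k := by
    calc (2 * p - 1) * m + m = ((2 * p - 1) + 1) * m := by rw [add_mul, one_mul]
      _ = 2 * p * m := by rw [show (2 * p - 1) + 1 = 2 * p from by omega]
      _ = k := hkm.symm
  set A := (2 * p - 1) * m with hA
  constructor
  · rw [hdivk]
    omega
  · intro hlt
    have hsq : 4 * p ≤ 2 * p ^ 2 := by nlinarith
    have h5 : 2 * p ^ 2 < 4 * p + k := by
      rw [Nat.add_comm (4 * p) k]; exact (Nat.sub_lt_iff_lt_add hsq).mp hlt
    have h3 : 2 * p * p < 2 * p * (m + 2) := by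
      calc 2 * p * p = 2 * p ^ 2 := by ring
        _ < 4 * p + k := h5
        _ = 2 * p * (m + 2) := by rw [hkm]; ring
    have h4 : p < m + 2 := Nat.lt_of_mul_lt_mul_left h3
    omega
end

section
/- For any nonzero polynomial f over ℕ with zero constant term and degree d, the complexity of f is at most f(1) + d − 1. -/
open Polynomial

/-- The complexity of a polynomial `f ∈ ℕ[X]`: the least number of `x`'s in an
expression evaluating to `f` at `x = X`. -/
noncomputable def polyComplexity (f : Polynomial ℕ) : ℕ :=
  sInf {m | ∃ e : Expr, e.size = m ∧ e.eval (Polynomial.X : Polynomial ℕ) = f}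

/-- The `n`-th complexity class: polynomials over `ℕ` (expressible, hence with zero
constant term) whose complexity is exactly `n`. -/
noncomputable def K (n : ℕ) : Set (Polynomial ℕ) :=
  {f | (∃ e : Expr, e.eval (Polynomial.X : Polynomial ℕ) = f) ∧ polyComplexity f = n}

/-- add `n` copies of `x` to `e` -/
def iterAdd (e : Expr) : ℕ → Expr
  | 0 => e
  | n + 1 => .add (iterAdd e n) .x

lemma iterAdd_size (e : Expr) (n : ℕ) : (iterAdd e n).size = e.size + n := by
  induction n with
  | zero => rfl
  | succ n ih => simp [iterAdd, Expr.size, ih]; ring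

lemma iterAdd_eval (e : Expr) (n : ℕ) :
    (iterAdd e n).eval (X : Polynomial ℕ) = e.eval X + n • (X : Polynomial ℕ) := by
  induction n with
  | zero => simp [iterAdd]
  | succ n ih => simp [iterAdd, Expr.eval, ih, succ_nsmul]; ring

lemma aux : ∀ n (g : Polynomial ℕ), g.natDegree ≤ n → g ≠ 0 →
    ∃ e : Expr, e.eval (X : Polynomial ℕ) = X * g ∧ e.size ≤ g.eval 1 + g.natDegree := by
  intro n
  induction n with
  | zero =>
    intro g hd hg
    have hc : g = C (g.coeff 0) := (Polynomial.eq_C_of_natDegree_eq_zero (Nat.le_zero.mp hd))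
    have hc1 : 1 ≤ g.coeff 0 := by
      rcases Nat.eq_zero_or_pos (g.coeff 0) with h | h
      · exact absurd (by rw [hc, h, map_zero]) hg
      · exact h
    refine ⟨iterAdd .x (g.coeff 0 - 1), ?_, ?_⟩
    · rw [iterAdd_eval]
      have : X * g = (g.coeff 0) • (X : Polynomial ℕ) := by
        conv_lhs => rw [hc]
        rw [Polynomial.smul_eq_C_mul, mul_comm]
      rw [this, Expr.eval]
      calc X + (g.coeff 0 - 1) • (X : Polynomial ℕ)
          = ((g.coeff 0 - 1) + 1) • (X : Polynomial ℕ) := by rw [succ_nsmul]; ring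
        _ = (g.coeff 0) • (X : Polynomial ℕ) := by rw [Nat.sub_add_cancel hc1]
    · rw [iterAdd_size, Expr.size]
      have : g.eval 1 = g.coeff 0 := by conv_lhs => rw [hc]; simp
      omega
  | succ n ih =>
    intro g hd hg
    by_cases hdiv : g.divX = 0
    · have hc : g = C (g.coeff 0) := by
        rw [Polynomial.divX_eq_zero_iff] at hdiv; exact hdiv
      exact ih g (by rw [hc]; simp) hg
    · have hdX := Polynomial.natDegree_divX_eq_natDegree_tsub_one (p := g)
      obtain ⟨e, he, hs⟩ := ih g.divX (by omega) hdiv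
      refine ⟨iterAdd (.mul .x e) (g.coeff 0), ?_, ?_⟩
      · rw [iterAdd_eval]
        simp only [Expr.eval, he]
        have : X * g = X * (X * g.divX) + (g.coeff 0) • (X : Polynomial ℕ) := by
          conv_lhs => rw [← Polynomial.X_mul_divX_add g]
          rw [Polynomial.smul_eq_C_mul]
          ring
        rw [this]
      · rw [iterAdd_size]
        simp only [Expr.size]
        have hg1 : g.eval 1 = g.coeff 0 + g.divX.eval 1 := by
          conv_lhs => rw [← Polynomial.X_mul_divX_add g]
          simp [add_comm]
        have h2 : g.natDegree ≠ 0 := by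
          intro hz
          exact hdiv (by rw [Polynomial.divX_eq_zero_iff]; exact Polynomial.eq_C_of_natDegree_eq_zero hz)
        omega

theorem complexity_le_coeffsum_add_degree (f : Polynomial ℕ)
    (hf : f ≠ 0) (h0 : f.coeff 0 = 0) :
    (∃ e : Expr, e.eval (Polynomial.X : Polynomial ℕ) = f ∧
        e.size ≤ f.eval 1 + f.natDegree - 1) ∧
      polyComplexity f ≤ f.eval 1 + f.natDegree - 1 := by
  have hdiv : f.divX ≠ 0 := by
    intro h
    rw [Polynomial.divX_eq_zero_iff, h0, map_zero] at h
    exact hf h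
  obtain ⟨e, he, hs⟩ := aux f.divX.natDegree f.divX le_rfl hdiv
  have hfX : X * f.divX = f := by
    have := Polynomial.X_mul_divX_add f
    rwa [h0, map_zero, add_zero] at this
  have hg1 : f.eval 1 = f.divX.eval 1 := by
    conv_lhs => rw [← hfX]; simp
  have hgd : f.natDegree = f.divX.natDegree + 1 := by
    have h1 := Polynomial.natDegree_divX_eq_natDegree_tsub_one (p := f)
    have h2 : f.natDegree ≠ 0 := by
      intro hz
      have := Polynomial.eq_C_of_natDegree_eq_zero hz
      rw [h0, map_zero] at this
      exact hf this
    omega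
  have hbound : e.size ≤ f.eval 1 + f.natDegree - 1 := by omega
  refine ⟨⟨e, by rw [he, hfX], hbound⟩, ?_⟩
  exact le_trans (Nat.sInf_le ⟨e, rfl, by rw [he, hfX]⟩) hbound
end

section
/- The number of polynomials f over ℕ with zero constant term having modified complexity exactly k and degree exactly a, for naturals a ≥ 1 and k ≥ a, is exactly C(k−1, a−1). -/
open Polynomial

/-- Modified-complexity (Horner form) expressions: `x`; `e + x`; `e · x`. -/
inductive HExpr where
  | x : HExpr
  | addX : HExpr → HExpr
  | mulX : HExpr → HExpr

/-- The modified complexity of a Horner-form expression: its number of `x`'s. -/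
def HExpr.size : HExpr → ℕ
  | .x => 1
  | .addX e => e.size + 1
  | .mulX e => e.size + 1

/-- Evaluate a Horner-form expression in `ℕ[X]`, sending `x` to `X`. -/
noncomputable def HExpr.eval : HExpr → Polynomial ℕ
  | .x => Polynomial.X
  | .addX e => e.eval + Polynomial.X
  | .mulX e => e.eval * Polynomial.X

/-- number of `mulX` in a Horner expression -/
def HExpr.muls : HExpr → ℕ
  | .x => 0
  | .addX e => e.muls
  | .mulX e => e.muls + 1

lemma HExpr.one_le_eval_one (e : HExpr) : 1 ≤ (HExpr.eval e).eval 1 := by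
  induction e with
  | x => simp [HExpr.eval]
  | addX e ih =>
    simp only [HExpr.eval, Polynomial.eval_add, Polynomial.eval_X]
    omega
  | mulX e ih => simpa [HExpr.eval] using ih

lemma addX_cancel {p q : Polynomial ℕ} (h : p + X = q + X) : p = q := by
  ext n
  have := congrArg (fun r => Polynomial.coeff r n) h
  simp only [Polynomial.coeff_add] at this
  omega

lemma HExpr.eval_ne_zero (e : HExpr) : e.eval ≠ 0 := by
  intro h
  have := e.one_le_eval_one
  rw [h] at this
  simp at this

lemma HExpr.coeff_zero (e : HExpr) : (HExpr.eval e).coeff 0 = 0 := by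
  induction e with
  | x => simp [HExpr.eval]
  | addX e ih => simp [HExpr.eval, ih]
  | mulX e ih => simp [HExpr.eval, Polynomial.coeff_mul_X_zero]

lemma HExpr.eval_injective : Function.Injective HExpr.eval := by
  intro e
  induction e with
  | x =>
    intro e' h
    cases e' with
    | x => rfl
    | addX f =>
      exfalso
      have : (0 : Polynomial ℕ) + X = HExpr.eval f + X := by
        simpa [HExpr.eval] using h
      exact f.eval_ne_zero ((addX_cancel this).symm)
    | mulX f =>
      exfalso
      have h1 := congrArg (fun p => Polynomial.coeff p 1) h
      simp [HExpr.eval, Polynomial.coeff_mul_X, f.coeff_zero] at h1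
  | addX e ih =>
    intro e' h
    cases e' with
    | x =>
      exfalso
      have : HExpr.eval e + X = (0 : Polynomial ℕ) + X := by
        simpa [HExpr.eval] using h
      exact e.eval_ne_zero (addX_cancel this)
    | addX f =>
      have : HExpr.eval e = HExpr.eval f := by
        exact addX_cancel h
      rw [ih this]
    | mulX f =>
      exfalso
      have h1 := congrArg (fun p => Polynomial.coeff p 1) h
      simp [HExpr.eval, Polynomial.coeff_mul_X, f.coeff_zero] at h1
  | mulX e ih =>
    intro e' h
    cases e' with
    | x =>
      exfalso
      have h1 := congrArg (fun p => Polynomial.coeff p 1) h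
      simp [HExpr.eval, Polynomial.coeff_mul_X, e.coeff_zero] at h1
    | addX f =>
      exfalso
      have h1 := congrArg (fun p => Polynomial.coeff p 1) h
      simp [HExpr.eval, Polynomial.coeff_mul_X, e.coeff_zero] at h1
    | mulX f =>
      have : HExpr.eval e = HExpr.eval f := by
        apply Polynomial.ext
        intro n
        have := congrArg (fun p => Polynomial.coeff p (n + 1)) h
        simpa [HExpr.eval, Polynomial.coeff_mul_X] using this
      rw [ih this]

lemma HExpr.natDegree_eval (e : HExpr) : (HExpr.eval e).natDegree = e.muls + 1 := by
  induction e with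
  | x => simp [HExpr.eval, HExpr.muls]
  | addX e ih =>
    show (HExpr.eval e + X).natDegree = e.muls + 1
    rcases Nat.lt_or_ge 1 (HExpr.eval e).natDegree with h | h
    · rw [Polynomial.natDegree_add_eq_left_of_natDegree_lt (by simpa using h), ih]
    · have he : (HExpr.eval e).natDegree = 1 := by omega
      have hle : (HExpr.eval e + X).natDegree ≤ 1 :=
        Polynomial.natDegree_add_le_of_le (le_of_eq he) (le_of_eq Polynomial.natDegree_X)
      have hne : (HExpr.eval e + X).coeff 1 ≠ 0 := by simp
      have h1 := Polynomial.le_natDegree_of_ne_zero hne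
      show (HExpr.eval e + X).natDegree = e.muls + 1
      omega
  | mulX e ih =>
    show (HExpr.eval e * X).natDegree = e.muls + 1 + 1
    rw [Polynomial.natDegree_mul_X e.eval_ne_zero, ih]

/-- Build a Horner expression from a list of operation flags (`true` = multiply). -/
def buildH : List Bool → HExpr
  | [] => .x
  | true :: l => .mulX (buildH l)
  | false :: l => .addX (buildH l)

lemma size_buildH (l : List Bool) : (buildH l).size = l.length + 1 := by
  induction l with
  | nil => rfl
  | cons b t ih => cases b <;> simp [buildH, HExpr.size, ih]

lemma muls_buildH (l : List Bool) : (buildH l).muls = l.count true := by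
  induction l with
  | nil => rfl
  | cons b t ih => cases b <;> simp [buildH, HExpr.muls, ih, List.count_cons]

lemma buildH_surjective : Function.Surjective buildH := by
  intro e
  induction e with
  | x => exact ⟨[], rfl⟩
  | addX e ih => obtain ⟨l, rfl⟩ := ih; exact ⟨false :: l, rfl⟩
  | mulX e ih => obtain ⟨l, rfl⟩ := ih; exact ⟨true :: l, rfl⟩

lemma buildH_injective : Function.Injective buildH := by
  intro l
  induction l with
  | nil =>
    intro l' h
    cases l' with
    | nil => rfl
    | cons b t => cases b <;> simp [buildH] at h
  | cons b t ih =>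
    intro l' h
    cases l' with
    | nil => cases b <;> simp [buildH] at h
    | cons b' t' =>
      cases b <;> cases b' <;> simp [buildH] at h <;> rw [ih h]

lemma count_lists (n m : ℕ) :
    {l : List Bool | l.length = n ∧ l.count true = m}.ncard = n.choose m := by
  induction n generalizing m with
  | zero =>
    cases m with
    | zero =>
      have : {l : List Bool | l.length = 0 ∧ l.count true = 0} = {([] : List Bool)} := by
        ext l; simp [List.length_eq_zero_iff]
        rintro rfl; simp
      rw [this]; simp
    | succ m =>
      have : {l : List Bool | l.length = 0 ∧ l.count true = m + 1} = ∅ := by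
        ext l; simp [List.length_eq_zero_iff]
        rintro rfl; simp
      rw [this]; simp
  | succ n ih =>
    cases m with
    | zero =>
      have hset : {l : List Bool | l.length = n + 1 ∧ l.count true = 0}
          = (fun t => false :: t) '' {l : List Bool | l.length = n ∧ l.count true = 0} := by
        ext l
        constructor
        · rintro ⟨hlen, hcnt⟩
          cases l with
          | nil => simp at hlen
          | cons b t =>
            cases b with
            | true => simp [List.count_cons] at hcnt
            | false =>
              refine ⟨t, ⟨by simpa using hlen, by simpa [List.count_cons] using hcnt⟩, rfl⟩
        · rintro ⟨t, ⟨hlen, hcnt⟩, rfl⟩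
          exact ⟨by simp [hlen], by simp [List.count_cons, hcnt]⟩
      rw [hset, Set.ncard_image_of_injective _ (fun a b h => by simpa using h), ih 0]
      simp
    | succ m =>
      have hset : {l : List Bool | l.length = n + 1 ∧ l.count true = m + 1}
          = (fun t => true :: t) '' {l : List Bool | l.length = n ∧ l.count true = m}
            ∪ (fun t => false :: t) '' {l : List Bool | l.length = n ∧ l.count true = m + 1} := by
        ext l
        constructor
        · rintro ⟨hlen, hcnt⟩
          cases l with
          | nil => simp at hlen
          | cons b t =>
            cases b with
            | true =>
              exact Or.inl ⟨t, ⟨by simpa using hlen, by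
                simp [List.count_cons] at hcnt; omega⟩, rfl⟩
            | false =>
              exact Or.inr ⟨t, ⟨by simpa using hlen, by simpa [List.count_cons] using hcnt⟩, rfl⟩
        · rintro (⟨t, ⟨hlen, hcnt⟩, rfl⟩ | ⟨t, ⟨hlen, hcnt⟩, rfl⟩)
          · exact ⟨by simp [hlen], by simp [List.count_cons, hcnt]⟩
          · exact ⟨by simp [hlen], by simp [List.count_cons, hcnt]⟩
      have hfin : ∀ p : ℕ, {l : List Bool | l.length = n ∧ l.count true = p}.Finite :=
        fun p => (List.finite_length_eq Bool n).subset (fun l h => h.1)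
      have hdisj : Disjoint
          ((fun t => true :: t) '' {l : List Bool | l.length = n ∧ l.count true = m})
          ((fun t => false :: t) '' {l : List Bool | l.length = n ∧ l.count true = m + 1}) := by
        rw [Set.disjoint_left]
        rintro l ⟨t, _, rfl⟩ ⟨t', _, h⟩
        simp at h
      rw [hset, Set.ncard_union_eq hdisj ((hfin m).image _) ((hfin (m+1)).image _),
        Set.ncard_image_of_injective _ (fun a b h => by simpa using h : Function.Injective (fun t => true :: t)),
        Set.ncard_image_of_injective _ (fun a b h => by simpa using h : Function.Injective (fun t => false :: t)),
        ih m, ih (m+1)]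
      rw [Nat.choose_succ_succ]

theorem card_modified_complexity_fixed_degree (k a : ℕ) (ha : 1 ≤ a) (hk : a ≤ k) :
    {f : Polynomial ℕ | ∃ e : HExpr, e.eval = f ∧ e.size = k ∧ f.natDegree = a}.ncard
      = Nat.choose (k - 1) (a - 1) := by
  have hset : {f : Polynomial ℕ | ∃ e : HExpr, e.eval = f ∧ e.size = k ∧ f.natDegree = a}
      = (fun l => (buildH l).eval) '' {l : List Bool | l.length = k - 1 ∧ l.count true = a - 1} := by
    ext f
    constructor
    · rintro ⟨e, rfl, hsize, hdeg⟩
      obtain ⟨l, rfl⟩ := buildH_surjective e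
      refine ⟨l, ⟨?_, ?_⟩, rfl⟩
      · have := size_buildH l; omega
      · have h1 := muls_buildH l
        have h2 := (buildH l).natDegree_eval
        omega
    · rintro ⟨l, ⟨hlen, hcnt⟩, rfl⟩
      refine ⟨buildH l, rfl, ?_, ?_⟩
      · rw [size_buildH, hlen]; omega
      · rw [(buildH l).natDegree_eval, muls_buildH, hcnt]; omega
  rw [hset]
  have hinj : Function.Injective (fun l => (buildH l).eval) :=
    HExpr.eval_injective.comp buildH_injective
  rw [Set.ncard_image_of_injective _ hinj, count_lists]
end

section
/- For every natural base s > 1 coprime to m and every nonzero residue n in ℤ/mℤ, the complexity of n with base s (the minimal number of s's needed to express n using + and · in ℤ/mℤ) is at most (s/ln s)·ln m + s − 1. -/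
/-- Complexity in `ZMod m` with base `s`. -/
noncomputable def modComplexity (m : ℕ) (s : ℕ) (n : ZMod m) : ℕ :=
  sInf {c | ∃ e : Expr, e.size = c ∧ e.eval (s : ZMod m) = n}

/-- `rep k` is `k+1` copies of `x` added together. -/
def rep : ℕ → Expr
  | 0 => .x
  | k+1 => .add (rep k) .x

lemma rep_size (k : ℕ) : (rep k).size = k + 1 := by
  induction k with
  | zero => rfl
  | succ k ih => simp [rep, Expr.size, ih]

lemma rep_eval {R : Type*} [CommSemiring R] (z : R) (k : ℕ) :
    (rep k).eval z = (k + 1 : ℕ) * z := by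
  induction k with
  | zero => simp [rep, Expr.eval]
  | succ k ih =>
    simp only [rep, Expr.eval, ih]
    push_cast
    ring

def E (s : ℕ) (q : ℕ) : Expr :=
  if h : q < s ∨ s ≤ 1 then rep (q - 1)
  else if q % s = 0 then (E s (q / s)).mul .x
  else .add ((E s (q / s)).mul .x) (rep (q % s - 1))
termination_by q
decreasing_by
  all_goals
    push_neg at h
    exact Nat.div_lt_self (by omega) h.2

lemma E_eval {R : Type*} [CommSemiring R] (s : ℕ) (hs : 1 < s) (q : ℕ) (hq : 1 ≤ q) :
    (E s q).eval (s : R) = (s : R) * (q : R) := by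
  induction q using Nat.strong_induction_on with
  | _ q ih =>
  rw [E]
  by_cases h : q < s ∨ s ≤ 1
  · rw [dif_pos h]
    rw [rep_eval]
    have : q - 1 + 1 = q := by omega
    rw [this]; ring
  · rw [dif_neg h]
    push_neg at h
    have hdiv : 1 ≤ q / s := Nat.one_le_div_iff (by omega) |>.2 h.1
    have ihd := ih (q / s) (Nat.div_lt_self (by omega) h.2) hdiv
    have key : (s : R) * (q / s : ℕ) * s + (q % s : ℕ) * s = s * q := by
      have := Nat.div_add_mod q s
      calc (s : R) * (q / s : ℕ) * s + (q % s : ℕ) * s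
          = ((s * (q / s) + q % s : ℕ) : R) * s := by push_cast; ring
        _ = (s : R) * q := by rw [this]; ring
    by_cases h0 : q % s = 0
    · rw [if_pos h0]
      simp only [Expr.eval, ihd]
      rw [← key, h0]
      simp
    · rw [if_neg h0]
      simp only [Expr.eval, ihd, rep_eval]
      have : q % s - 1 + 1 = q % s := by omega
      rw [this, ← key]

lemma E_size (s : ℕ) (hs : 1 < s) (q : ℕ) (hq : 1 ≤ q) :
    (E s q).size + 1 ≤ s * Nat.log s q + s := by
  induction q using Nat.strong_induction_on with
  | _ q ih =>
  rw [E]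
  by_cases h : q < s ∨ s ≤ 1
  · rw [dif_pos h]
    rw [rep_size]
    have : q < s := by omega
    omega
  · rw [dif_neg h]
    push_neg at h
    have hdiv : 1 ≤ q / s := Nat.one_le_div_iff (by omega) |>.2 h.1
    have ihd := ih (q / s) (Nat.div_lt_self (by omega) h.2) hdiv
    have hlog : Nat.log s (q / s) = Nat.log s q - 1 := Nat.log_div_base s q
    have hlogpos : 0 < Nat.log s q := Nat.log_pos hs h.1
    have hmod : q % s < s := Nat.mod_lt _ (by omega)
    have hLL : Nat.log s (q / s) + 1 = Nat.log s q := by omega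
    have hmul : s * Nat.log s (q / s) + s = s * Nat.log s q := by
      rw [← hLL, Nat.mul_add, Nat.mul_one]
    by_cases h0 : q % s = 0
    · rw [if_pos h0]
      simp only [Expr.size]
      linarith
    · rw [if_neg h0]
      simp only [Expr.size, rep_size]
      have : q % s ≤ s - 1 := by omega
      have hs1 : 1 ≤ s := by omega
      omega

theorem modComplexity_upper_bound (m s : ℕ) (hm : 1 < m) (hs : 1 < s)
    (hcop : Nat.Coprime s m) (n : ZMod m) (hn : n ≠ 0) :
    (∃ e : Expr, e.eval (s : ZMod m) = n ∧
        (e.size : ℝ) ≤ s / Real.log s * Real.log m + s - 1) ∧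
      (modComplexity m s n : ℝ) ≤ s / Real.log s * Real.log m + s - 1 := by
  haveI : NeZero m := ⟨by omega⟩
  have hu : IsUnit (s : ZMod m) := (ZMod.isUnit_iff_coprime s m).2 hcop
  set a : ZMod m := (s : ZMod m)⁻¹ * n with ha
  have hna : (s : ZMod m) * a = n := by
    rw [ha, ← mul_assoc, ZMod.mul_inv_of_unit _ hu, one_mul]
  have ha0 : a ≠ 0 := by
    intro h
    rw [h, mul_zero] at hna
    exact hn hna.symm
  set q : ℕ := a.val with hqdef
  have hq1 : 1 ≤ q := by
    rcases Nat.eq_zero_or_pos q with h | h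
    · exact absurd ((ZMod.val_eq_zero a).1 h) ha0
    · exact h
  have hqm : q < m := ZMod.val_lt a
  have heval : (E s q).eval (s : ZMod m) = n := by
    rw [E_eval s hs q hq1]
    rw [hqdef, ZMod.natCast_val, ZMod.cast_id, hna]
  have hsize : (E s q).size + 1 ≤ s * Nat.log s q + s := E_size s hs q hq1
  set L : ℕ := Nat.log s q with hL
  have hlogs : (0 : ℝ) < Real.log s := Real.log_pos (by exact_mod_cast hs)
  have hpow : (s : ℝ) ^ L ≤ (m : ℝ) := by
    have h1 : s ^ L ≤ q := Nat.pow_log_le_self s (by omega)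
    have : s ^ L ≤ m := le_trans h1 (le_of_lt hqm)
    exact_mod_cast this
  have hLlog : (L : ℝ) * Real.log s ≤ Real.log m := by
    have := Real.log_le_log (by positivity) hpow
    rwa [Real.log_pow] at this
  have hmain : (s : ℝ) * L ≤ s / Real.log s * Real.log m := by
    have h1 : (s : ℝ) / Real.log s * ((L : ℝ) * Real.log s) ≤ s / Real.log s * Real.log m := by
      apply mul_le_mul_of_nonneg_left hLlog
      positivity
    calc (s : ℝ) * L = s / Real.log s * ((L : ℝ) * Real.log s) := by
          field_simp
        _ ≤ _ := h1
  have hsizeR : ((E s q).size : ℝ) ≤ s / Real.log s * Real.log m + s - 1 := by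
    have h2 : ((E s q).size : ℝ) ≤ (s : ℝ) * L + s - 1 := by
      have := hsize
      have h3 : ((E s q).size : ℝ) + 1 ≤ (s * L + s : ℕ) := by exact_mod_cast this
      push_cast at h3
      linarith
    linarith
  refine ⟨⟨E s q, heval, hsizeR⟩, ?_⟩
  have hmem : (E s q).size ∈ {c | ∃ e : Expr, e.size = c ∧ e.eval (s : ZMod m) = n} :=
    ⟨E s q, rfl, heval⟩
  have h4 : modComplexity m s n ≤ (E s q).size := Nat.sInf_le hmem
  calc (modComplexity m s n : ℝ) ≤ ((E s q).size : ℝ) := by exact_mod_cast h4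
    _ ≤ _ := hsizeR
end
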